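/- arXiv:2310.07923 — 3 statements merged into one kernel-verified Lean document; each statement's English description precedes it below -/
import Mathlib

section
/- For all real numbers q and k, the Euclidean inner product of the layer-norm hashes satisfies φ(q, 1) · φ(k, 1) = (qk + 1)/√((q² + 1)(k² + 1)). -/
open scoped RealInnerProductSpace

/-- Layer norm: subtract the mean, then normalize to unit Euclidean norm. -/
noncomputable def layerNorm {ι : Type*} [Fintype ι] (v : EuclideanSpace ℝ ι) :
    EuclideanSpace ℝ ι :=
  let c : EuclideanSpace ℝ ι := WithLp.toLp 2 (fun j => v j - (∑ l, v l) / (Fintype.card ι))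
  ‖c‖⁻¹ • c

/-- The layer-norm hash φ(x, y) = layer_norm(⟨x, y, −x, −y⟩) ∈ ℝ⁴. -/
noncomputable def lnHash (x y : ℝ) : EuclideanSpace ℝ (Fin 4) :=
  layerNorm (WithLp.toLp 2 ![x, y, -x, -y] : EuclideanSpace ℝ (Fin 4))

/-! The vector ⟨x, y, −x, −y⟩ already has mean zero, so layer norm only normalizes it. The inner
product of two hashes is therefore the cosine of the angle between ⟨x, y⟩ and ⟨x', y'⟩: doubling
the coordinates multiplies both the inner product and the squared norms by the same factor 2. -/

theorem layerNorm_of_sum_eq_zero {ι : Type*} [Fintype ι] (v : EuclideanSpace ℝ ι)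
    (hv : ∑ i, v i = 0) : layerNorm v = ‖v‖⁻¹ • v := by
  simp [layerNorm, hv]

theorem real_inner_inv_norm_smul_inv_norm_smul {F : Type*} [NormedAddCommGroup F]
    [InnerProductSpace ℝ F] (v w : F) :
    ⟪‖v‖⁻¹ • v, ‖w‖⁻¹ • w⟫ = ⟪v, w⟫ / (‖v‖ * ‖w‖) := by
  rw [real_inner_smul_left, real_inner_smul_right, div_eq_inv_mul, mul_inv]
  ring

theorem inner_toLp_antipodal (x y x' y' : ℝ) :
    ⟪(WithLp.toLp 2 ![x, y, -x, -y] : EuclideanSpace ℝ (Fin 4)),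
      WithLp.toLp 2 ![x', y', -x', -y']⟫ = 2 * (x * x' + y * y') := by
  simp only [PiLp.inner_apply, RCLike.inner_apply, conj_trivial, Fin.sum_univ_four,
    Matrix.cons_val_zero, Matrix.cons_val_one, Matrix.cons_val_two,
    Matrix.cons_val_three, Matrix.head_cons, Matrix.tail_cons]
  ring

theorem lnHash_eq (x y : ℝ) :
    lnHash x y = ‖(WithLp.toLp 2 ![x, y, -x, -y] : EuclideanSpace ℝ (Fin 4))‖⁻¹ •
      (WithLp.toLp 2 ![x, y, -x, -y] : EuclideanSpace ℝ (Fin 4)) :=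
  layerNorm_of_sum_eq_zero _ (by simp [Fin.sum_univ_four])

theorem real_inner_lnHash (x y x' y' : ℝ) :
    ⟪lnHash x y, lnHash x' y'⟫ = (x * x' + y * y') / √((x ^ 2 + y ^ 2) * (x' ^ 2 + y' ^ 2)) := by
  rw [lnHash_eq, lnHash_eq, real_inner_inv_norm_smul_inv_norm_smul, norm_eq_sqrt_real_inner,
    norm_eq_sqrt_real_inner, ← Real.sqrt_mul real_inner_self_nonneg, inner_toLp_antipodal,
    inner_toLp_antipodal, inner_toLp_antipodal]
  have hprod : 2 * (x * x + y * y) * (2 * (x' * x' + y' * y')) =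
      2 ^ 2 * ((x ^ 2 + y ^ 2) * (x' ^ 2 + y' ^ 2)) := by ring
  rw [hprod, Real.sqrt_mul (by positivity), Real.sqrt_sq zero_le_two,
    mul_div_mul_left _ _ two_ne_zero]

/-- Inner product formula: φ(q,1) · φ(k,1) = (qk + 1)/√((q² + 1)(k² + 1)). -/
theorem lnHash_inner_formula (q k : ℝ) :
    ⟪lnHash q 1, lnHash k 1⟫ = (q * k + 1) / Real.sqrt ((q ^ 2 + 1) * (k ^ 2 + 1)) := by
  simpa using real_inner_lnHash q 1 k 1
end

section
/- For all real numbers q and k, the Euclidean inner product φ(q, 1) · φ(k, 1) equals 1 if and only if q = k (equality check via layer-norm hash). -/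
open scoped RealInnerProductSpace

/-!
The vector `⟨x, y, -x, -y⟩` already has mean zero, so `φ(x, y)` is just its normalization, and
the inner product of two normalized vectors is `1` exactly when the vectors are positive multiples
of each other. A common second coordinate `y ≠ 0` forces the multiple to be `1`.
-/

open NormedSpace (normalize)

theorem layerNorm_eq_normalize_of_sum_eq_zero {ι : Type*} [Fintype ι] (v : EuclideanSpace ℝ ι)
    (hv : ∑ i, v i = 0) : layerNorm v = normalize v := by
  simp [layerNorm, NormedSpace.normalize, hv]

theorem real_inner_normalize_normalize {F : Type*} [NormedAddCommGroup F]
    [InnerProductSpace ℝ F] (u v : F) :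
    ⟪normalize u, normalize v⟫ = ⟪u, v⟫ / (‖u‖ * ‖v‖) := by
  rw [NormedSpace.normalize, NormedSpace.normalize, real_inner_smul_left, real_inner_smul_right]
  field_simp

noncomputable def hashVec (x y : ℝ) : EuclideanSpace ℝ (Fin 4) := !₂[x, y, -x, -y]

theorem lnHash_eq_normalize_hashVec (x y : ℝ) : lnHash x y = normalize (hashVec x y) :=
  layerNorm_eq_normalize_of_sum_eq_zero _ (by simp [Fin.sum_univ_four])

theorem hashVec_ne_zero (x : ℝ) {y : ℝ} (hy : y ≠ 0) : hashVec x y ≠ 0 := by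
  intro h
  exact hy (by simpa [hashVec] using congr($h 1))

theorem eq_of_hashVec_eq_smul {q k y r : ℝ} (hy : y ≠ 0)
    (h : hashVec k y = r • hashVec q y) : k = q := by
  have hr : r = 1 := by
    have h1 : y = r * y := by simpa [hashVec] using congr($h 1)
    exact (mul_eq_right₀ hy).1 h1.symm
  simpa [hashVec, hr] using congr($h 0)

/-- Equality check via layer-norm hash: φ(q,1) · φ(k,1) = 1 iff q = k. -/
theorem lnHash_inner_eq_one_iff (q k : ℝ) :
    ⟪lnHash q 1, lnHash k 1⟫ = 1 ↔ q = k := by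
  rw [lnHash_eq_normalize_hashVec, lnHash_eq_normalize_hashVec, real_inner_normalize_normalize,
    real_inner_div_norm_mul_norm_eq_one_iff]
  constructor
  · rintro ⟨-, r, -, h⟩
    exact (eq_of_hashVec_eq_smul one_ne_zero h).symm
  · rintro rfl
    exact ⟨hashVec_ne_zero q one_ne_zero, 1, one_pos, (one_smul ℝ _).symm⟩
end

section
/- Let q ∈ ℤ, let m ≥ 1, and let k₁, …, k_m ∈ ℤ. If either q > k_j for all 1 ≤ j ≤ m, or q < k_j for all 1 ≤ j ≤ m, then φ(q, 1) ≠ (1/m) · Σ_{j=1}^m φ(k_j, 1); that is, the layer-norm hash of q is distinct from the average of the layer-norm hashes of the k_j. -/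
open scoped RealInnerProductSpace

/-!
The mean of ⟨x, 1, −x, −1⟩ is 0, so the first coordinate of φ_x is x / √(2x² + 2) = sin (arctan x) / √2,
a strictly increasing function of x. Averaging acts coordinatewise, and a strictly increasing function
cannot take at q the average of its values at points that all lie below q, or all above q.
-/

open Finset Real
open scoped BigOperators

lemma StrictMono.apply_ne_expect {ι α β : Type*} [LinearOrder α] [AddCommMonoid β] [LinearOrder β]
    [IsOrderedCancelAddMonoid β] [Module ℚ≥0 β] [PosSMulStrictMono ℚ≥0 β] {f : α → β}
    (hf : StrictMono f) {s : Finset ι} (hs : s.Nonempty) {a : ι → α} {b : α}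
    (h : (∀ i ∈ s, a i < b) ∨ (∀ i ∈ s, b < a i)) : f b ≠ 𝔼 i ∈ s, f (a i) := by
  intro heq
  rcases h with h | h
  · obtain ⟨i, hi, hle⟩ := exists_le_of_le_expect hs heq.le
    exact (hf (h i hi)).not_ge hle
  · obtain ⟨i, hi, hle⟩ := exists_le_of_expect_le hs heq.ge
    exact (hf (h i hi)).not_ge hle

lemma lnHash_one_apply_zero (x : ℝ) : lnHash x 1 0 = sin (arctan x) / √2 := by
  simp only [lnHash, layerNorm, PiLp.smul_apply, smul_eq_mul, EuclideanSpace.norm_eq,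
    Fin.sum_univ_four, Matrix.cons_val_zero, Matrix.cons_val_one, Matrix.head_cons,
    Matrix.cons_val_two, Matrix.tail_cons, Matrix.cons_val_three, Real.norm_eq_abs, sq_abs,
    sin_arctan, show x + 1 + -x + -1 = 0 by ring, zero_div, sub_zero, neg_sq, one_pow,
    show x ^ 2 + 1 + x ^ 2 + 1 = 2 * (1 + x ^ 2) by ring, sqrt_mul zero_le_two]
  ring

lemma strictMono_lnHash_one_apply_zero : StrictMono fun x : ℝ => lnHash x 1 0 := by
  simpa only [lnHash_one_apply_zero] using
    sin_arctan_strictMono.div_const (sqrt_pos.2 zero_lt_two)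

/-- If q is strictly greater than every k_j, or strictly less than every k_j, then the
layer-norm hash of q differs from the average of the layer-norm hashes of the k_j. -/
theorem lnHash_ne_avg_of_strict (q : ℤ) (m : ℕ) (hm : 1 ≤ m) (k : Fin m → ℤ)
    (h : (∀ j, k j < q) ∨ (∀ j, q < k j)) :
    lnHash (q : ℝ) 1 ≠ (1 / (m : ℝ)) • ∑ j, lnHash ((k j : ℤ) : ℝ) 1 := by
  have : NeZero m := ⟨by omega⟩
  intro heq
  have hcoord : lnHash q 1 0 = 𝔼 j, lnHash (k j) 1 0 := by
    simpa [Fintype.expect_eq_sum_div_card, div_eq_inv_mul, WithLp.ofLp_sum] using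
      congrArg (· 0) heq
  exact (strictMono_lnHash_one_apply_zero.comp Int.cast_strictMono).apply_ne_expect
    univ_nonempty (by simpa using h) hcoord
end
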